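/- Let N ≥ 2 workers run GADMM with penalty ρ > 0, generating primal iterates θ_n^k and dual iterates λ_n^k, and suppose the unaugmented Lagrangian L_0({θ_n},{λ_n}) = Σ_{n=1}^N f_n(θ_n) + Σ_{n=1}^{N−1} ⟨λ_n, θ_n − θ_{n+1}⟩ has a saddle point ((θ*,…,θ*), (λ_1*,…,λ_{N−1}*)). Then the objective optimality gap converges to zero: lim_{k→∞} Σ_{n=1}^N f_n(θ_n^k) = Σ_{n=1}^N f_n(θ*). -/

import Mathlib

/-!
Each worker's update is a proximal step, so by convexity its new iterate satisfies a subgradient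
inequality whose gradient is the divergence of the edge multipliers that worker sees: tails see
`λᵏ⁺¹`, heads see the multipliers updated with the tails' stale values. Summing these at `θ*` and
adding the saddle-point inequality gives the classical ADMM descent `Vₖ₊₁ + ρ/2 · Dₖ ≤ Vₖ` for
`V = ∑ₗ (‖λₗ - λₗ*‖² / (2ρ) + ρ/2 · ‖θ_tail(l) - θ*‖²)`, where `Dₖ` collects the gaps between new
heads and old tails. Monotonicity of the tails' subgradients bounds the primal residuals `r` by `D`,
so they vanish. Finally the objective gap is squeezed between `-∑ₗ ⟪λₗ*, rₗ⟫` and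
`Vₖ - Vₖ₊₁ - ∑ₗ ⟪λₗ*, rₗ⟫`; both bounds tend to zero because `V` converges, so no bound on the
iterates is needed.
-/

open Finset Filter
open scoped RealInnerProductSpace Topology

/-- The unaugmented Lagrangian `L_0({θ_n}, {λ_n})`. -/
noncomputable def L0 {E : Type*} [NormedAddCommGroup E] [InnerProductSpace ℝ E]
    (N : ℕ) (f : ℕ → E → ℝ) (th la : ℕ → E) : ℝ :=
  ∑ n ∈ Finset.Icc 1 N, f n (th n)
    + ∑ n ∈ Finset.Icc 1 (N-1), ⟪la n, th n - th (n+1)⟫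

section General

variable {E : Type*} [NormedAddCommGroup E] [InnerProductSpace ℝ E]

theorem ConvexOn.le_add_inner_of_le_add_inner_add_sq {s : Set E} {f : E → ℝ}
    (hf : ConvexOn ℝ s f) {g y : E} {C : ℝ} (hy : y ∈ s)
    (h : ∀ x ∈ s, f y ≤ f x + ⟪g, x - y⟫ + C * ‖x - y‖ ^ 2) {x : E} (hx : x ∈ s) :
    f y ≤ f x + ⟪g, x - y⟫ := by
  have hsmall : ∀ t ∈ Set.Ioc (0 : ℝ) 1, f y ≤ f x + ⟪g, x - y⟫ + t * (C * ‖x - y‖ ^ 2) := by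
    rintro t ⟨ht0, ht1⟩
    have h1t : 0 ≤ 1 - t := by linarith
    have hz : (1 - t) • y + t • x - y = t • (x - y) := by module
    have hconv := hf.2 hy hx h1t ht0.le (by ring)
    have hmin := h _ (hf.1 hy hx h1t ht0.le (by ring))
    rw [hz, real_inner_smul_right, norm_smul, Real.norm_of_nonneg ht0.le] at hmin
    rw [smul_eq_mul, smul_eq_mul] at hconv
    have : t * f y ≤ t * (f x + ⟪g, x - y⟫ + t * (C * ‖x - y‖ ^ 2)) := by linarith
    exact le_of_mul_le_mul_left this ht0
  have hlim : Tendsto (fun t : ℝ => f x + ⟪g, x - y⟫ + t * (C * ‖x - y‖ ^ 2)) (𝓝[>] 0)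
      (𝓝 (f x + ⟪g, x - y⟫)) := by
    refine tendsto_nhdsWithin_of_tendsto_nhds ?_
    have : Continuous fun t : ℝ => f x + ⟪g, x - y⟫ + t * (C * ‖x - y‖ ^ 2) := by fun_prop
    simpa using this.tendsto 0
  exact ge_of_tendsto hlim (eventually_of_mem (Ioc_mem_nhdsGT zero_lt_one) hsmall)

theorem ConvexOn.le_add_inner_of_prox_step {s : Set E} {f : E → ℝ} (hf : ConvexOn ℝ s f)
    {u v c d y : E} {α β : ℝ} (hy : y ∈ s)
    (hmin : ∀ x ∈ s, f y + ⟪u, c - y⟫ + ⟪v, y - d⟫ + α / 2 * ‖c - y‖ ^ 2 + β / 2 * ‖y - d‖ ^ 2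
      ≤ f x + ⟪u, c - x⟫ + ⟪v, x - d⟫ + α / 2 * ‖c - x‖ ^ 2 + β / 2 * ‖x - d‖ ^ 2)
    {x : E} (hx : x ∈ s) :
    f y ≤ f x + ⟪(v + β • (y - d)) - (u + α • (c - y)), x - y⟫ := by
  -- Up to a constant, the objective is `f x + ⟪g, x - y⟫ + (α + β) / 2 * ‖x - y‖ ^ 2`.
  refine hf.le_add_inner_of_le_add_inner_add_sq (C := (α + β) / 2) hy (fun x hx => ?_) hx
  have := hmin x hx
  simp only [← real_inner_self_eq_norm_sq] at this ⊢
  simp only [inner_add_left, inner_sub_left, inner_sub_right, real_inner_smul_left] at this ⊢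
  simp only [real_inner_comm] at this ⊢
  linarith

theorem sum_Icc_sub_pred {M : Type*} [AddCommGroup M] (N : ℕ) (A B : ℕ → M) (hA : A N = 0)
    (hB : B 0 = 0) :
    ∑ n ∈ Icc 1 N, (A n - B (n - 1)) = ∑ l ∈ Icc 1 (N - 1), (A l - B l) := by
  have key : ∀ M, ∑ n ∈ Icc 1 (M + 1), (A n - B (n - 1))
      = ∑ l ∈ Icc 1 M, (A l - B l) + A (M + 1) - B 0 := by
    intro M
    induction M with
    | zero => simp
    | succ M ih =>
      rw [sum_Icc_succ_top (by omega), ih, sum_Icc_succ_top (by omega)]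
      simp only [Nat.add_sub_cancel]
      abel
  cases N with
  | zero => simp
  | succ M => rw [key, hA, hB, Nat.add_sub_cancel, sub_zero, add_zero]

theorem tendsto_sub_succ_of_antitone {V : ℕ → ℝ} (hV : Antitone V)
    (hbdd : BddBelow (Set.range V)) :
    Tendsto (fun k => V k - V (k + 1)) atTop (𝓝 0) := by
  have h := tendsto_atTop_ciInf hV hbdd
  simpa using h.sub (h.comp (tendsto_add_atTop_nat 1))

theorem tendsto_sum_inner_of_sum_norm_sq_le {ι : Type*} {s : Finset ι} {x : ℕ → ι → E}
    (y : ι → E) {c : ℕ → ℝ} (hc : Tendsto c atTop (𝓝 0)) (hx : ∀ j, ∑ i ∈ s, ‖x j i‖ ^ 2 ≤ c j) :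
    Tendsto (fun j => ∑ i ∈ s, ⟪y i, x j i⟫) atTop (𝓝 0) := by
  have hterm : ∀ i ∈ s, Tendsto (fun j => x j i) atTop (𝓝 0) := by
    intro i hi
    rw [tendsto_zero_iff_norm_tendsto_zero]
    refine squeeze_zero (fun j => norm_nonneg _) (fun j => Real.le_sqrt_of_sq_le ?_)
      (by simpa using hc.sqrt)
    exact (single_le_sum (fun i _ => sq_nonneg ‖x j i‖) hi).trans (hx j)
  simpa using tendsto_finsetSum s fun i hi =>
    (tendsto_const_nhds (x := y i)).inner (𝕜 := ℝ) (hterm i hi)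

end General

namespace GADMM

variable {E : Type*} [NormedAddCommGroup E]

/-- Edge `l` joins workers `l` and `l + 1`; exactly one of them is a head (odd). -/
def edgeHead (l : ℕ) : ℕ := if Odd l then l else l + 1

def edgeTail (l : ℕ) : ℕ := if Odd l then l + 1 else l

/-- Heads update first, so a head sees the tails' previous iterate. -/
def seenIterate (θ : ℕ → ℕ → E) (k n j : ℕ) : E :=
  if Odd n ∧ Even j then θ k j else θ (k + 1) j

/-- The adjoint of the chain's incidence map, applied at worker `n` to the edge field `ν`. -/
def edgeDiv (N : ℕ) (ν : ℕ → E) (n : ℕ) : E :=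
  (if n < N then ν n else 0) - (if 1 < n then ν (n - 1) else 0)

noncomputable def lyapunov (N : ℕ) (ρ : ℝ) (θ lam : ℕ → ℕ → E) (θstar : E) (lamstar : ℕ → E)
    (k : ℕ) : ℝ :=
  ∑ l ∈ Icc 1 (N - 1),
    (1 / (2 * ρ) * ‖lam k l - lamstar l‖ ^ 2 + ρ / 2 * ‖θ k (edgeTail l) - θstar‖ ^ 2)

noncomputable def headTailGap (N : ℕ) (θ : ℕ → ℕ → E) (k : ℕ) : ℝ :=
  ∑ l ∈ Icc 1 (N - 1), ‖θ (k + 1) (edgeHead l) - θ k (edgeTail l)‖ ^ 2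

variable {N : ℕ} {f : ℕ → E → ℝ} {ρ : ℝ} {θ lam : ℕ → ℕ → E}

theorem norm_sub_succ_eq_norm_head_sub_tail (x : ℕ → E) (l : ℕ) :
    ‖x l - x (l + 1)‖ = ‖x (edgeHead l) - x (edgeTail l)‖ := by
  by_cases hl : Odd l
  · simp [edgeHead, edgeTail, hl]
  · simp [edgeHead, edgeTail, hl, norm_sub_rev]

theorem lyapunov_nonneg (hρ : 0 < ρ) (θstar : E) (lamstar : ℕ → E) (k : ℕ) :
    0 ≤ lyapunov N ρ θ lam θstar lamstar k :=
  sum_nonneg fun _ _ => add_nonneg (mul_nonneg (by positivity) (sq_nonneg _))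
    (mul_nonneg (by positivity) (sq_nonneg _))

variable [InnerProductSpace ℝ E]

def seenDual (ρ : ℝ) (θ lam : ℕ → ℕ → E) (k n l : ℕ) : E :=
  lam k l + ρ • (seenIterate θ k n l - seenIterate θ k n (l + 1))

theorem sum_inner_edgeDiv (ν : ℕ → ℕ → E) (w : ℕ → E) :
    ∑ n ∈ Icc 1 N, ⟪edgeDiv N (ν n) n, w n⟫
      = ∑ l ∈ Icc 1 (N - 1), (⟪ν l l, w l⟫ - ⟪ν (l + 1) l, w (l + 1)⟫) := by
  have h := sum_Icc_sub_pred N (fun n => ⟪if n < N then ν n n else 0, w n⟫)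
    (fun l => ⟪if 0 < l then ν (l + 1) l else 0, w (l + 1)⟫) (by simp) (by simp)
  rw [sum_congr rfl fun l hl => ?_, h, sum_congr rfl fun l hl => ?_]
  · obtain ⟨hl1, hlN⟩ := mem_Icc.mp hl
    simp only [if_pos (show l < N by omega), if_pos (show 0 < l by omega)]
  · obtain ⟨hl1, -⟩ := mem_Icc.mp hl
    simp only [edgeDiv, inner_sub_left, Nat.sub_add_cancel hl1, Nat.lt_sub_iff_add_lt, zero_add]

theorem worker_optimality (hNeven : Even N) (hconv : ∀ n, ConvexOn ℝ Set.univ (f n))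
    (hHead : ∀ k n, Odd n → 1 < n → n ≤ N → ∀ x : E,
      f n (θ (k + 1) n) + ⟪lam k (n - 1), θ k (n - 1) - θ (k + 1) n⟫
        + ⟪lam k n, θ (k + 1) n - θ k (n + 1)⟫
        + ρ / 2 * ‖θ k (n - 1) - θ (k + 1) n‖ ^ 2 + ρ / 2 * ‖θ (k + 1) n - θ k (n + 1)‖ ^ 2
      ≤ f n x + ⟪lam k (n - 1), θ k (n - 1) - x⟫ + ⟪lam k n, x - θ k (n + 1)⟫
        + ρ / 2 * ‖θ k (n - 1) - x‖ ^ 2 + ρ / 2 * ‖x - θ k (n + 1)‖ ^ 2)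
    (hHead1 : ∀ k, ∀ x : E,
      f 1 (θ (k + 1) 1) + ⟪lam k 1, θ (k + 1) 1 - θ k 2⟫ + ρ / 2 * ‖θ (k + 1) 1 - θ k 2‖ ^ 2
      ≤ f 1 x + ⟪lam k 1, x - θ k 2⟫ + ρ / 2 * ‖x - θ k 2‖ ^ 2)
    (hTail : ∀ k n, Even n → 0 < n → n < N → ∀ x : E,
      f n (θ (k + 1) n) + ⟪lam k (n - 1), θ (k + 1) (n - 1) - θ (k + 1) n⟫
        + ⟪lam k n, θ (k + 1) n - θ (k + 1) (n + 1)⟫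
        + ρ / 2 * ‖θ (k + 1) (n - 1) - θ (k + 1) n‖ ^ 2
        + ρ / 2 * ‖θ (k + 1) n - θ (k + 1) (n + 1)‖ ^ 2
      ≤ f n x + ⟪lam k (n - 1), θ (k + 1) (n - 1) - x⟫ + ⟪lam k n, x - θ (k + 1) (n + 1)⟫
        + ρ / 2 * ‖θ (k + 1) (n - 1) - x‖ ^ 2 + ρ / 2 * ‖x - θ (k + 1) (n + 1)‖ ^ 2)
    (hTailN : ∀ k, ∀ x : E,
      f N (θ (k + 1) N) + ⟪lam k (N - 1), θ (k + 1) (N - 1) - θ (k + 1) N⟫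
        + ρ / 2 * ‖θ (k + 1) (N - 1) - θ (k + 1) N‖ ^ 2
      ≤ f N x + ⟪lam k (N - 1), θ (k + 1) (N - 1) - x⟫ + ρ / 2 * ‖θ (k + 1) (N - 1) - x‖ ^ 2)
    (k : ℕ) {n : ℕ} (hn : n ∈ Icc 1 N) (x : E) :
    f n (θ (k + 1) n) ≤ f n x + ⟪edgeDiv N (seenDual ρ θ lam k n) n, x - θ (k + 1) n⟫ := by
  obtain ⟨hn1, hnN⟩ := mem_Icc.mp hn
  have hpred : n - 1 + 1 = n := Nat.sub_add_cancel hn1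
  rcases Nat.even_or_odd n with hev | hodd
  · have hn2 : 1 < n := by obtain ⟨j, rfl⟩ := hev; omega
    have hodd' : ¬ Odd n := Nat.not_odd_iff_even.mpr hev
    rcases hnN.eq_or_lt with rfl | hlt
    · have h := (hconv n).le_add_inner_of_prox_step (v := 0) (d := 0) (β := 0)
        (Set.mem_univ _) (fun x _ => by simpa using hTailN k x) (Set.mem_univ x)
      convert h using 3
      simp [edgeDiv, seenDual, seenIterate, hodd', hn2, hpred]
    · have h := (hconv n).le_add_inner_of_prox_step (Set.mem_univ _)
        (fun x _ => hTail k n hev (by omega) hlt x) (Set.mem_univ x)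
      convert h using 3
      simp [edgeDiv, seenDual, seenIterate, hodd', hn2, hlt, hpred]
  · have hlt : n < N := by
      obtain ⟨j, rfl⟩ := hodd; obtain ⟨m, rfl⟩ := hNeven; omega
    have hev' : ¬ Even n := Nat.not_even_iff_odd.mpr hodd
    rcases hn1.eq_or_lt with rfl | hn2
    · have h := (hconv 1).le_add_inner_of_prox_step (u := 0) (c := 0) (α := 0)
        (Set.mem_univ _) (fun x _ => by simpa using hHead1 k x) (Set.mem_univ x)
      convert h using 3
      simp [edgeDiv, seenDual, seenIterate, hlt]
    · have h := (hconv n).le_add_inner_of_prox_step (Set.mem_univ _)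
        (fun x _ => hHead k n hodd hn2 hnN x) (Set.mem_univ x)
      convert h using 3
      have hsucc : Even (n + 1) := hodd.add_one
      have hpred' : Even (n - 1) := by obtain ⟨j, rfl⟩ := hodd; simp
      simp [edgeDiv, seenDual, seenIterate, hodd, hev', hn2, hlt, hpred, hsucc, hpred']

theorem edge_energy_identity (hρ : ρ ≠ 0)
    (hDual : ∀ k n, 1 ≤ n → n ≤ N - 1 →
      lam (k + 1) n = lam k n + ρ • (θ (k + 1) n - θ (k + 1) (n + 1)))
    (θstar : E) (lamstar : ℕ → E) (k : ℕ) {l : ℕ} (hl : l ∈ Icc 1 (N - 1)) :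
    ⟪lamstar l, θ (k + 1) l - θ (k + 1) (l + 1)⟫
        + (⟪seenDual ρ θ lam k l l, θstar - θ (k + 1) l⟫
          - ⟪seenDual ρ θ lam k (l + 1) l, θstar - θ (k + 1) (l + 1)⟫)
      = (1 / (2 * ρ) * ‖lam k l - lamstar l‖ ^ 2 + ρ / 2 * ‖θ k (edgeTail l) - θstar‖ ^ 2)
        - (1 / (2 * ρ) * ‖lam (k + 1) l - lamstar l‖ ^ 2
          + ρ / 2 * ‖θ (k + 1) (edgeTail l) - θstar‖ ^ 2)
        - ρ / 2 * ‖θ (k + 1) (edgeHead l) - θ k (edgeTail l)‖ ^ 2 := by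
  obtain ⟨hl1, hl2⟩ := mem_Icc.mp hl
  rw [hDual k l hl1 hl2]
  by_cases hpar : Even l <;>
    simp only [seenDual, seenIterate, edgeHead, edgeTail, ← Nat.not_even_iff_odd,
      Nat.even_add_one, hpar, not_true_eq_false, not_false_eq_true, false_and, true_and, if_false,
      if_true] <;>
    simp only [← real_inner_self_eq_norm_sq] <;>
    simp only [inner_add_left, inner_add_right, inner_sub_left, inner_sub_right,
      real_inner_smul_left, real_inner_smul_right] <;>
    simp only [real_inner_comm] <;>
    field_simp <;>
    ring

theorem objective_descent (hρ : ρ ≠ 0)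
    (hopt : ∀ k, ∀ n ∈ Icc 1 N, ∀ x,
      f n (θ (k + 1) n) ≤ f n x + ⟪edgeDiv N (seenDual ρ θ lam k n) n, x - θ (k + 1) n⟫)
    (hDual : ∀ k n, 1 ≤ n → n ≤ N - 1 →
      lam (k + 1) n = lam k n + ρ • (θ (k + 1) n - θ (k + 1) (n + 1)))
    (θstar : E) (lamstar : ℕ → E) (k : ℕ) :
    ∑ n ∈ Icc 1 N, f n (θ (k + 1) n) - ∑ n ∈ Icc 1 N, f n θstar
        + ∑ l ∈ Icc 1 (N - 1), ⟪lamstar l, θ (k + 1) l - θ (k + 1) (l + 1)⟫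
        + ρ / 2 * headTailGap N θ k
      ≤ lyapunov N ρ θ lam θstar lamstar k - lyapunov N ρ θ lam θstar lamstar (k + 1) := by
  have hobj : ∑ n ∈ Icc 1 N, f n (θ (k + 1) n) - ∑ n ∈ Icc 1 N, f n θstar
      ≤ ∑ n ∈ Icc 1 N, ⟪edgeDiv N (seenDual ρ θ lam k n) n, θstar - θ (k + 1) n⟫ := by
    rw [← sum_sub_distrib]
    exact sum_le_sum fun n hn => by linarith [hopt k n hn θstar]
  have henergy := sum_congr rfl fun l hl => edge_energy_identity hρ hDual θstar lamstar k hl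
  rw [sum_add_distrib] at henergy
  simp only [sum_sub_distrib] at henergy
  rw [sum_inner_edgeDiv, sum_sub_distrib] at hobj
  simp only [lyapunov, headTailGap, mul_sum]
  linarith

theorem edgeDiv_seenDual_succ_sub_of_even
    (hDual : ∀ k n, 1 ≤ n → n ≤ N - 1 →
      lam (k + 1) n = lam k n + ρ • (θ (k + 1) n - θ (k + 1) (n + 1)))
    (k : ℕ) {n : ℕ} (hn : n ∈ Icc 1 N) (hev : Even n) :
    edgeDiv N (seenDual ρ θ lam (k + 1) n) n - edgeDiv N (seenDual ρ θ lam k n) n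
      = ρ • edgeDiv N (fun l => θ (k + 2) l - θ (k + 2) (l + 1)) n := by
  obtain ⟨hn1, hnN⟩ := mem_Icc.mp hn
  have hodd : ¬ Odd n := Nat.not_odd_iff_even.mpr hev
  have hn2 : 1 < n := by obtain ⟨j, rfl⟩ := hev; omega
  have hstep : ∀ l, 1 ≤ l → l ≤ N - 1 → seenDual ρ θ lam (k + 1) n l - seenDual ρ θ lam k n l
      = ρ • (θ (k + 2) l - θ (k + 2) (l + 1)) := by
    intro l hl1 hl2
    simp only [seenDual, seenIterate, hodd, false_and, if_false, ← hDual k l hl1 hl2]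
    abel
  simp only [edgeDiv, if_pos hn2]
  split_ifs with hlt
  · rw [smul_sub, ← hstep n hn1 (by omega), ← hstep (n - 1) (by omega) (by omega)]
    abel
  · rw [smul_sub, smul_zero, ← hstep (n - 1) (by omega) (by omega)]
    abel

theorem sum_inner_residual_tail_increment_nonneg (hρ : 0 < ρ)
    (hopt : ∀ k, ∀ n ∈ Icc 1 N, ∀ x,
      f n (θ (k + 1) n) ≤ f n x + ⟪edgeDiv N (seenDual ρ θ lam k n) n, x - θ (k + 1) n⟫)
    (hDual : ∀ k n, 1 ≤ n → n ≤ N - 1 →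
      lam (k + 1) n = lam k n + ρ • (θ (k + 1) n - θ (k + 1) (n + 1)))
    (k : ℕ) :
    0 ≤ ∑ l ∈ Icc 1 (N - 1), ⟪θ (k + 2) (edgeHead l) - θ (k + 2) (edgeTail l),
      θ (k + 2) (edgeTail l) - θ (k + 1) (edgeTail l)⟫ := by
  let w : ℕ → E := fun n => if Even n then θ (k + 1) n - θ (k + 2) n else 0
  have hterm : ∀ n ∈ Icc 1 N,
      0 ≤ ⟪edgeDiv N (fun l => θ (k + 2) l - θ (k + 2) (l + 1)) n, w n⟫ := by
    intro n hn
    by_cases hev : Even n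
    · have h1 := hopt k n hn (θ (k + 2) n)
      have h2 := hopt (k + 1) n hn (θ (k + 1) n)
      have hmono : 0 ≤ ⟪ρ • edgeDiv N (fun l => θ (k + 2) l - θ (k + 2) (l + 1)) n,
          θ (k + 1) n - θ (k + 2) n⟫ := by
        rw [← edgeDiv_seenDual_succ_sub_of_even hDual k hn hev, inner_sub_left]
        rw [← neg_sub (θ (k + 1) n), inner_neg_right] at h1
        linarith
      rw [real_inner_smul_left] at hmono
      simpa [w, hev] using nonneg_of_mul_nonneg_right hmono hρ
    · simp [w, hev]
  have hsum := sum_nonneg hterm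
  rw [sum_inner_edgeDiv (fun _ l => θ (k + 2) l - θ (k + 2) (l + 1)) w] at hsum
  refine hsum.trans_eq (sum_congr rfl fun l _ => ?_)
  by_cases hpar : Even l <;>
    simp only [w, edgeHead, edgeTail, ← Nat.not_even_iff_odd, Nat.even_add_one, hpar,
      not_true_eq_false, not_false_eq_true, if_false, if_true, inner_zero_right, sub_zero,
      zero_sub]
  · rw [← inner_neg_neg, neg_sub, neg_sub]
  · rw [← inner_neg_right, neg_sub]

theorem sum_residual_sq_le_headTailGap (hρ : 0 < ρ)
    (hopt : ∀ k, ∀ n ∈ Icc 1 N, ∀ x,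
      f n (θ (k + 1) n) ≤ f n x + ⟪edgeDiv N (seenDual ρ θ lam k n) n, x - θ (k + 1) n⟫)
    (hDual : ∀ k n, 1 ≤ n → n ≤ N - 1 →
      lam (k + 1) n = lam k n + ρ • (θ (k + 1) n - θ (k + 1) (n + 1)))
    (k : ℕ) :
    ∑ l ∈ Icc 1 (N - 1), ‖θ (k + 2) l - θ (k + 2) (l + 1)‖ ^ 2 ≤ headTailGap N θ (k + 1) := by
  have hmono := sum_inner_residual_tail_increment_nonneg hρ hopt hDual k
  have hedge : ∀ l ∈ Icc 1 (N - 1), ‖θ (k + 2) l - θ (k + 2) (l + 1)‖ ^ 2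
      + 2 * ⟪θ (k + 2) (edgeHead l) - θ (k + 2) (edgeTail l),
        θ (k + 2) (edgeTail l) - θ (k + 1) (edgeTail l)⟫
      ≤ ‖θ (k + 2) (edgeHead l) - θ (k + 1) (edgeTail l)‖ ^ 2 := by
    intro l _
    have hsplit : θ (k + 2) (edgeHead l) - θ (k + 1) (edgeTail l)
        = (θ (k + 2) (edgeHead l) - θ (k + 2) (edgeTail l))
          + (θ (k + 2) (edgeTail l) - θ (k + 1) (edgeTail l)) := (sub_add_sub_cancel _ _ _).symm
    rw [norm_sub_succ_eq_norm_head_sub_tail (θ (k + 2)), hsplit, norm_add_sq_real]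
    linarith [sq_nonneg ‖θ (k + 2) (edgeTail l) - θ (k + 1) (edgeTail l)‖]
  have := sum_le_sum hedge
  rw [sum_add_distrib, ← mul_sum] at this
  unfold headTailGap
  linarith

end GADMM

theorem gadmm_objective_tendsto_optimal_general
    {E : Type*} [NormedAddCommGroup E] [InnerProductSpace ℝ E]
    (N : ℕ) (hNeven : Even N)
    (f : ℕ → E → ℝ) (hconv : ∀ n, ConvexOn ℝ Set.univ (f n))
    (ρ : ℝ) (hρ : 0 < ρ)
    (θ lam : ℕ → ℕ → E)
    -- (a) head updates: interior odd workers 1 < n ≤ N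
    (hHead : ∀ k n, Odd n → 1 < n → n ≤ N → ∀ x : E,
      f n (θ (k+1) n) + ⟪lam k (n-1), θ k (n-1) - θ (k+1) n⟫
        + ⟪lam k n, θ (k+1) n - θ k (n+1)⟫
        + ρ/2 * ‖θ k (n-1) - θ (k+1) n‖^2 + ρ/2 * ‖θ (k+1) n - θ k (n+1)‖^2
      ≤ f n x + ⟪lam k (n-1), θ k (n-1) - x⟫ + ⟪lam k n, x - θ k (n+1)⟫
        + ρ/2 * ‖θ k (n-1) - x‖^2 + ρ/2 * ‖x - θ k (n+1)‖^2)
    -- (a) head update for the first worker n = 1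
    (hHead1 : ∀ k, ∀ x : E,
      f 1 (θ (k+1) 1) + ⟪lam k 1, θ (k+1) 1 - θ k 2⟫ + ρ/2 * ‖θ (k+1) 1 - θ k 2‖^2
      ≤ f 1 x + ⟪lam k 1, x - θ k 2⟫ + ρ/2 * ‖x - θ k 2‖^2)
    -- (b) tail updates: even workers 0 < n < N
    (hTail : ∀ k n, Even n → 0 < n → n < N → ∀ x : E,
      f n (θ (k+1) n) + ⟪lam k (n-1), θ (k+1) (n-1) - θ (k+1) n⟫
        + ⟪lam k n, θ (k+1) n - θ (k+1) (n+1)⟫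
        + ρ/2 * ‖θ (k+1) (n-1) - θ (k+1) n‖^2 + ρ/2 * ‖θ (k+1) n - θ (k+1) (n+1)‖^2
      ≤ f n x + ⟪lam k (n-1), θ (k+1) (n-1) - x⟫ + ⟪lam k n, x - θ (k+1) (n+1)⟫
        + ρ/2 * ‖θ (k+1) (n-1) - x‖^2 + ρ/2 * ‖x - θ (k+1) (n+1)‖^2)
    -- (b) tail update for the last worker n = N
    (hTailN : ∀ k, ∀ x : E,
      f N (θ (k+1) N) + ⟪lam k (N-1), θ (k+1) (N-1) - θ (k+1) N⟫
        + ρ/2 * ‖θ (k+1) (N-1) - θ (k+1) N‖^2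
      ≤ f N x + ⟪lam k (N-1), θ (k+1) (N-1) - x⟫ + ρ/2 * ‖θ (k+1) (N-1) - x‖^2)
    -- (c) dual updates
    (hDual : ∀ k n, 1 ≤ n → n ≤ N - 1 →
      lam (k+1) n = lam k n + ρ • (θ (k+1) n - θ (k+1) (n+1)))
    (θstar : E) (lamstar : ℕ → E)
    (hsaddle : ∀ (th la : ℕ → E),
      L0 N f (fun _ => θstar) la ≤ L0 N f (fun _ => θstar) lamstar ∧
      L0 N f (fun _ => θstar) lamstar ≤ L0 N f th lamstar) :
    Tendsto (fun k => ∑ n ∈ Icc 1 N, f n (θ k n)) atTop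
      (𝓝 (∑ n ∈ Icc 1 N, f n θstar)) := by
  set pstar := ∑ n ∈ Icc 1 N, f n θstar
  set R : ℕ → ℝ := fun j => ∑ l ∈ Icc 1 (N - 1), ⟪lamstar l, θ j l - θ j (l + 1)⟫
  set V := GADMM.lyapunov N ρ θ lam θstar lamstar
  have hopt := GADMM.worker_optimality hNeven hconv hHead hHead1 hTail hTailN
  have hsad : ∀ j, pstar ≤ ∑ n ∈ Icc 1 N, f n (θ j n) + R j := fun j => by
    simpa [L0] using (hsaddle (θ j) lamstar).2
  have hdesc := GADMM.objective_descent hρ.ne' hopt hDual θstar lamstar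
  have hgap_nonneg : ∀ k, 0 ≤ GADMM.headTailGap N θ k := fun _ =>
    sum_nonneg fun _ _ => sq_nonneg _
  have hgap_le : ∀ k, ρ / 2 * GADMM.headTailGap N θ k ≤ V k - V (k + 1) := fun k => by
    linarith [hdesc k, hsad (k + 1)]
  have hVstep : Tendsto (fun k => V k - V (k + 1)) atTop (𝓝 0) :=
    tendsto_sub_succ_of_antitone
      (antitone_nat_of_succ_le fun k => by
        linarith [hgap_le k, mul_nonneg (half_pos hρ).le (hgap_nonneg k)])
      ⟨0, by rintro _ ⟨k, rfl⟩; exact GADMM.lyapunov_nonneg hρ θstar lamstar k⟩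
  have hgap : Tendsto (GADMM.headTailGap N θ) atTop (𝓝 0) :=
    squeeze_zero hgap_nonneg (fun k => (le_div_iff₀' (half_pos hρ)).mpr (hgap_le k))
      (by simpa using hVstep.div_const (ρ / 2))
  have hR : Tendsto (fun k => R (k + 2)) atTop (𝓝 0) :=
    tendsto_sum_inner_of_sum_norm_sq_le lamstar (hgap.comp (tendsto_add_atTop_nat 1))
      (GADMM.sum_residual_sq_le_headTailGap hρ hopt hDual)
  refine (tendsto_add_atTop_iff_nat 2).mp (tendsto_of_tendsto_of_tendsto_of_le_of_le
    (g := fun k => pstar - R (k + 2)) (h := fun k => pstar + (V (k + 1) - V (k + 2)) - R (k + 2))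
    ?_ ?_ (fun k => ?_) (fun k => ?_))
  · simpa using tendsto_const_nhds.sub hR
  · simpa using (tendsto_const_nhds.add (hVstep.comp (tendsto_add_atTop_nat 1))).sub hR
  · linarith [hsad (k + 2)]
  · linarith [hdesc (k + 1), mul_nonneg (half_pos hρ).le (hgap_nonneg (k + 1))]

theorem gadmm_objective_tendsto_optimal
    {E : Type*} [NormedAddCommGroup E] [InnerProductSpace ℝ E] [FiniteDimensional ℝ E]
    (N : ℕ) (hN : 2 ≤ N) (hNeven : Even N)
    (f : ℕ → E → ℝ) (hconv : ∀ n, ConvexOn ℝ Set.univ (f n))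
    (ρ : ℝ) (hρ : 0 < ρ)
    (θ lam : ℕ → ℕ → E)
    -- (a) head updates: interior odd workers 1 < n ≤ N
    (hHead : ∀ k n, Odd n → 1 < n → n ≤ N → ∀ x : E,
      f n (θ (k+1) n) + ⟪lam k (n-1), θ k (n-1) - θ (k+1) n⟫
        + ⟪lam k n, θ (k+1) n - θ k (n+1)⟫
        + ρ/2 * ‖θ k (n-1) - θ (k+1) n‖^2 + ρ/2 * ‖θ (k+1) n - θ k (n+1)‖^2
      ≤ f n x + ⟪lam k (n-1), θ k (n-1) - x⟫ + ⟪lam k n, x - θ k (n+1)⟫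
        + ρ/2 * ‖θ k (n-1) - x‖^2 + ρ/2 * ‖x - θ k (n+1)‖^2)
    -- (a) head update for the first worker n = 1
    (hHead1 : ∀ k, ∀ x : E,
      f 1 (θ (k+1) 1) + ⟪lam k 1, θ (k+1) 1 - θ k 2⟫ + ρ/2 * ‖θ (k+1) 1 - θ k 2‖^2
      ≤ f 1 x + ⟪lam k 1, x - θ k 2⟫ + ρ/2 * ‖x - θ k 2‖^2)
    -- (b) tail updates: even workers 0 < n < N
    (hTail : ∀ k n, Even n → 0 < n → n < N → ∀ x : E,
      f n (θ (k+1) n) + ⟪lam k (n-1), θ (k+1) (n-1) - θ (k+1) n⟫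
        + ⟪lam k n, θ (k+1) n - θ (k+1) (n+1)⟫
        + ρ/2 * ‖θ (k+1) (n-1) - θ (k+1) n‖^2 + ρ/2 * ‖θ (k+1) n - θ (k+1) (n+1)‖^2
      ≤ f n x + ⟪lam k (n-1), θ (k+1) (n-1) - x⟫ + ⟪lam k n, x - θ (k+1) (n+1)⟫
        + ρ/2 * ‖θ (k+1) (n-1) - x‖^2 + ρ/2 * ‖x - θ (k+1) (n+1)‖^2)
    -- (b) tail update for the last worker n = N
    (hTailN : ∀ k, ∀ x : E,
      f N (θ (k+1) N) + ⟪lam k (N-1), θ (k+1) (N-1) - θ (k+1) N⟫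
        + ρ/2 * ‖θ (k+1) (N-1) - θ (k+1) N‖^2
      ≤ f N x + ⟪lam k (N-1), θ (k+1) (N-1) - x⟫ + ρ/2 * ‖θ (k+1) (N-1) - x‖^2)
    -- (c) dual updates
    (hDual : ∀ k n, 1 ≤ n → n ≤ N - 1 →
      lam (k+1) n = lam k n + ρ • (θ (k+1) n - θ (k+1) (n+1)))
    (θstar : E) (lamstar : ℕ → E)
    (hsaddle : ∀ (th la : ℕ → E),
      L0 N f (fun _ => θstar) la ≤ L0 N f (fun _ => θstar) lamstar ∧
      L0 N f (fun _ => θstar) lamstar ≤ L0 N f th lamstar) :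
    Tendsto (fun k => ∑ n ∈ Icc 1 N, f n (θ k n)) atTop
      (𝓝 (∑ n ∈ Icc 1 N, f n θstar)) :=
  gadmm_objective_tendsto_optimal_general N hNeven f hconv ρ hρ θ lam hHead hHead1 hTail hTailN
    hDual θstar lamstar hsaddle
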